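/- Let Δ = {(r_0,…,r_l) ∈ [0,1]^{l+1} : r_0⋯r_m = |π|}. For special monomials a = a_n t^n and a' = a'_{n'} t^{n'} in A = k°[t_0,…,t_l]/(t_0⋯t_m − π), the divisibility a' ∈ aA holds if and only if |a|_r ≥ |a'|_r for all r ∈ Δ, where |a_n t^n|_r = |a_n| r_0^{n_0}⋯r_l^{n_l}. -/

import Mathlib

open scoped NNReal
open MvPolynomial

noncomputable section

namespace Altered

variable {k : Type*} [Field k]

/-- The defining ideal (t₀⋯t_m - π) of a model semistable scheme. -/
def modelIdeal (v : Valuation k ℝ≥0) (l m : ℕ) (π : v.integer) :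
    Ideal (MvPolynomial (Fin (l + 1)) v.integer) :=
  Ideal.span
    {(∏ i ∈ Finset.univ.filter (fun i : Fin (l + 1) => (i : ℕ) ≤ m), X i) - C π}

/-- The coordinate ring A = k°[t₀,…,t_l]/(t₀⋯t_m − π) of a model semistable scheme. -/
abbrev ModelRing (v : Valuation k ℝ≥0) (l m : ℕ) (π : v.integer) :=
  MvPolynomial (Fin (l + 1)) v.integer ⧸ modelIdeal v l m π

variable (v : Valuation k ℝ≥0) (l m : ℕ) (π : v.integer)

/-- An exponent tuple n ∈ ℤ^m × ℕ^(l-m): index j : Fin l stands for the variable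
t_{j+1}, and exponents of t_{j+1} for j ≥ m must be nonnegative. -/
def IsSpecialIndex (n : Fin l → ℤ) : Prop := ∀ j : Fin l, m ≤ (j : ℕ) → 0 ≤ n j

/-- D(n) = −min(0, n₁,…,n_m). -/
def negDeg (n : Fin l → ℤ) : ℕ :=
  (Finset.univ.filter (fun j : Fin l => (j : ℕ) < m)).sup fun j => (-n j).toNat

/-- The special monomial a_n t^n with coefficient a_n = b·π^{D(n)}
(so that the bound |a_n| ≤ |π|^{−min(0,n₁,…,n_m)} holds automatically),
written as an honest element of A: b·π^{D}·t^n = b·t₀^D·∏_{1≤i≤m} t_i^{n_i+D}·∏_{i>m} t_i^{n_i}. -/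
def specialMonomial (b : v.integer) (n : Fin l → ℤ) : ModelRing v l m π :=
  Ideal.Quotient.mk (modelIdeal v l m π)
    (C b * X (0 : Fin (l + 1)) ^ negDeg l m n *
      ∏ j : Fin l, X j.succ ^
        (if (j : ℕ) < m then (n j + negDeg l m n).toNat else (n j).toNat))

/-- The set Δ of monomial semivaluation parameters:
r ∈ [0,1]^{l+1} with r₀⋯r_m = |π|. -/
def Delta : Set (Fin (l + 1) → ℝ≥0) :=
  {r | (∀ i, r i ≤ 1) ∧
    ∏ i ∈ Finset.univ.filter (fun i : Fin (l + 1) => (i : ℕ) ≤ m), r i = v (π : k)}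

/-- The value |a_n t^n|_r = |a_n|·r^n of the special monomial with coefficient
a_n = b·π^{D(n)} at r ∈ Δ.  (On Δ, r_i ≠ 0 whenever a negative exponent occurs.) -/
def monValue (b : v.integer) (n : Fin l → ℤ) (r : Fin (l + 1) → ℝ≥0) : ℝ≥0 :=
  v (b : k) * v (π : k) ^ (negDeg l m n : ℤ) * ∏ j : Fin l, r j.succ ^ (n j)

end Altered

/-!
Using `π = t₀⋯t_m`, the special monomial `b π^{D(n)} t^n` is a monomial `b t^N` with
`N ∈ ℕ^{l+1}`, and on `Δ` its value `|b| |π|^{D(n)} r^n` is `|b| r^N`. For such monomials both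
`b t^N ∣ b' t^{N'}` and `|b'| r^{N'} ≤ |b| r^N` on `Δ` are equivalent to: `N_i ≤ N'_i` for `i > m`,
and `|b'| |π|^{N'_i} ≤ |b| |π|^{N_i}` for `i ≤ m`.

Necessity is tested on the ring maps `A → k°`, `t_i ↦ π`, `t_j ↦ 1` (`i ≤ m`) and `A → k°[X]`,
`t₀ ↦ π`, `t_i ↦ X`, `t_j ↦ 1` (`i > m`), and on the matching points of `Δ`, with `r_i = ε → 0`
in the second case. Conversely, if `i₀ ≤ m` minimises `N'_i - N_i`, dividing out the right power
of `π` leaves a quotient `c t^e` with `e ≥ 0`, and the condition at `i₀` says `c ∈ k°`.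
-/

lemma Fintype.prod_pow_mulSingle {ι M : Type*} [Fintype ι] [DecidableEq ι] [CommMonoid M]
    (a : ι) (y : M) (N : ι → ℕ) : ∏ j, Pi.mulSingle a y j ^ N j = y ^ N a := by
  rw [Fintype.prod_eq_single a fun j hj => by simp [hj]]
  simp

lemma NNReal.le_of_forall_mul_pow_le {u u' : ℝ≥0} (hu' : u' ≠ 0) {a a' : ℕ}
    (h : ∀ ε : ℝ≥0, 0 < ε → ε ≤ 1 → u' * ε ^ a' ≤ u * ε ^ a) : a ≤ a' := by
  by_contra! ha
  have hle : ∀ ε : ℝ≥0, 0 < ε → ε ≤ 1 → u' ≤ u * ε := fun ε hε hε1 => by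
    have : u' * ε ^ a' ≤ u * ε * ε ^ a' := calc
      u' * ε ^ a' ≤ u * ε ^ a := h ε hε hε1
      _ ≤ u * ε ^ (a' + 1) := by gcongr u * ?_; exact pow_le_pow_of_le_one zero_le hε1 ha
      _ = u * ε * ε ^ a' := by ring
    exact le_of_mul_le_mul_right this (pow_pos hε a')
  have hlim : Filter.Tendsto (fun ε : ℝ≥0 => u * ε) (nhdsWithin 0 (Set.Ioi 0)) (nhds 0) := by
    simpa using ((continuous_const_mul u).tendsto 0).mono_left nhdsWithin_le_nhds
  have := ge_of_tendsto hlim (Filter.mem_of_superset (Ioo_mem_nhdsGT zero_lt_one)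
    fun ε hε => hle ε hε.1 hε.2.le)
  exact hu' (le_antisymm this zero_le)

lemma NNReal.mul_pow_le_mul_pow_iff_tsub {x u w : ℝ≥0} (hx : x ≠ 0) (a c : ℕ) :
    u * x ^ a ≤ w * x ^ c ↔ u * x ^ (a - c) ≤ w * x ^ (c - a) := by
  have hmin : 0 < x ^ min a c := pow_pos (pos_iff_ne_zero.mpr hx) _
  conv_rhs => rw [← mul_le_mul_iff_left₀ hmin]
  rw [mul_assoc, mul_assoc, ← pow_add, ← pow_add, Nat.sub_add_min_cancel, min_comm,
    Nat.sub_add_min_cancel]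

namespace Altered

section

variable {k : Type*} [Field k] (v : Valuation k ℝ≥0) (l m : ℕ) (π : v.integer)

def modelIndices : Finset (Fin (l + 1)) := Finset.univ.filter fun i => (i : ℕ) ≤ m

lemma zero_mem_modelIndices : (0 : Fin (l + 1)) ∈ modelIndices l m := by
  simp [modelIndices]

lemma prod_modelIndices {M : Type*} [CommMonoid M] (f : Fin (l + 1) → M) :
    ∏ i ∈ modelIndices l m, f i = f 0 * ∏ j : Fin l, if (j : ℕ) < m then f j.succ else 1 := by
  rw [modelIndices, Finset.prod_filter, Fin.prod_univ_succ]
  simp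

lemma prod_pow_add_indicator {M : Type*} [CommMonoid M] (x : Fin (l + 1) → M)
    (N : Fin (l + 1) → ℕ) (d : ℕ) :
    ∏ i, x i ^ (N i + if i ∈ modelIndices l m then d else 0)
      = (∏ i, x i ^ N i) * (∏ i ∈ modelIndices l m, x i) ^ d := by
  simp only [pow_add, Finset.prod_mul_distrib, pow_ite, pow_zero, Finset.prod_ite_mem,
    Finset.univ_inter, Finset.prod_pow]

lemma mem_Delta_iff {r : Fin (l + 1) → ℝ≥0} :
    r ∈ Delta v l m π ↔ (∀ i, r i ≤ 1) ∧ ∏ i ∈ modelIndices l m, r i = v (π : k) :=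
  Iff.rfl

def modelMonomial (b : v.integer) (N : Fin (l + 1) → ℕ) : ModelRing v l m π :=
  Ideal.Quotient.mk (modelIdeal v l m π) (C b * ∏ i, X i ^ N i)

lemma neg_le_negDeg (n : Fin l → ℤ) {j : Fin l} (hj : (j : ℕ) < m) : -n j ≤ negDeg l m n := by
  have : (-n j).toNat ≤ negDeg l m n :=
    Finset.le_sup (f := fun j => (-n j).toNat) (by simpa using hj)
  omega

def specialExponent (n : Fin l → ℤ) : Fin (l + 1) → ℕ :=
  Fin.cons (negDeg l m n) fun j => if (j : ℕ) < m then (n j + negDeg l m n).toNat else (n j).toNat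

lemma specialMonomial_eq_modelMonomial (b : v.integer) (n : Fin l → ℤ) :
    specialMonomial v l m π b n = modelMonomial v l m π b (specialExponent l m n) := by
  simp [specialMonomial, modelMonomial, specialExponent, Fin.prod_univ_succ, mul_assoc]

def MonomialDvdCondition (b : v.integer) (N : Fin (l + 1) → ℕ) (b' : v.integer)
    (N' : Fin (l + 1) → ℕ) : Prop :=
  (∀ i ∉ modelIndices l m, N i ≤ N' i) ∧
    ∀ i ∈ modelIndices l m, v (b' : k) * v (π : k) ^ N' i ≤ v (b : k) * v (π : k) ^ N i

variable {v l m π}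

lemma modelMonomial_mul (b c : v.integer) (N M : Fin (l + 1) → ℕ) :
    modelMonomial v l m π b N * modelMonomial v l m π c M
      = modelMonomial v l m π (b * c) (N + M) := by
  simp only [modelMonomial, ← map_mul]
  congr 1
  simp only [Pi.add_apply, pow_add, Finset.prod_mul_distrib, map_mul]
  ring

lemma modelMonomial_add_indicator (b : v.integer) (N : Fin (l + 1) → ℕ) (d : ℕ) :
    modelMonomial v l m π b (fun i => N i + if i ∈ modelIndices l m then d else 0)
      = modelMonomial v l m π (b * π ^ d) N := by
  have hrel : Ideal.Quotient.mk (modelIdeal v l m π) (∏ i ∈ modelIndices l m, X i)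
      = Ideal.Quotient.mk (modelIdeal v l m π) (C π) :=
    Ideal.Quotient.eq.mpr (Ideal.subset_span rfl)
  simp only [modelMonomial, prod_pow_add_indicator, map_mul, map_pow, hrel]
  ring

variable (π) in
def ModelRing.eval₂Hom {R : Type*} [CommRing R] (f : v.integer →+* R) (x : Fin (l + 1) → R)
    (hx : ∏ i ∈ modelIndices l m, x i = f π) : ModelRing v l m π →+* R :=
  Ideal.Quotient.lift _ (MvPolynomial.eval₂Hom f x) fun a ha => by
    obtain ⟨q, rfl⟩ := Ideal.mem_span_singleton'.mp ha
    have hx' : ∏ i ∈ Finset.univ.filter (fun i : Fin (l + 1) => (i : ℕ) ≤ m), x i = f π := hx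
    simp [hx']

lemma ModelRing.eval₂Hom_modelMonomial {R : Type*} [CommRing R] (f : v.integer →+* R)
    (x : Fin (l + 1) → R) (hx : ∏ i ∈ modelIndices l m, x i = f π) (b : v.integer)
    (N : Fin (l + 1) → ℕ) :
    ModelRing.eval₂Hom π f x hx (modelMonomial v l m π b N) = f b * ∏ i, x i ^ N i := by
  simp [ModelRing.eval₂Hom, modelMonomial]

lemma monValue_eq_of_mem_Delta (hπ : π ≠ 0) (b : v.integer) {n : Fin l → ℤ}
    (hn : IsSpecialIndex l m n) {r : Fin (l + 1) → ℝ≥0} (hr : r ∈ Delta v l m π) :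
    monValue v l m π b n r = v (b : k) * ∏ i, r i ^ specialExponent l m n i := by
  have hprod : ∏ i ∈ modelIndices l m, r i = v (π : k) := hr.2
  have hr0 : ∀ j : Fin l, (j : ℕ) < m → r j.succ ≠ 0 := fun j hj h0 => by
    refine (show v (π : k) ≠ 0 by simpa using hπ) (hprod ▸ Finset.prod_eq_zero ?_ h0)
    simp [modelIndices, hj]
  rw [monValue, zpow_natCast, ← hprod, prod_modelIndices, Fin.prod_univ_succ, mul_pow,
    ← Finset.prod_pow, mul_assoc, mul_assoc, ← Finset.prod_mul_distrib]
  simp only [specialExponent, Fin.cons_zero, Fin.cons_succ]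
  congr 2
  refine Finset.prod_congr rfl fun j _ => ?_
  split_ifs with hj
  · rw [← zpow_natCast, ← zpow_add₀ (hr0 j hj), ← zpow_natCast,
      Int.toNat_of_nonneg (by linarith [neg_le_negDeg l m n hj]), add_comm]
  · rw [one_pow, one_mul, ← zpow_natCast, Int.toNat_of_nonneg (hn j (by omega))]

variable {b b' : v.integer} {N N' : Fin (l + 1) → ℕ}

lemma monomialDvdCondition_of_dvd (hπ : π ≠ 0) (hb' : b' ≠ 0)
    (h : modelMonomial v l m π b N ∣ modelMonomial v l m π b' N') :
    MonomialDvdCondition v l m π b N b' N' := by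
  constructor
  · intro i hi
    let x : Fin (l + 1) → Polynomial v.integer :=
      Pi.mulSingle (0 : Fin (l + 1)) (Polynomial.C π) * Pi.mulSingle i Polynomial.X
    have hx : ∏ j ∈ modelIndices l m, x j = Polynomial.C π := by
      simp [x, Finset.prod_mul_distrib, Finset.prod_pi_mulSingle', zero_mem_modelIndices, hi]
    have hxN : ∀ M : Fin (l + 1) → ℕ,
        ∏ j, x j ^ M j = Polynomial.C (π ^ M 0) * Polynomial.X ^ M i := by
      intro M
      simp [x, mul_pow, Finset.prod_mul_distrib, Fintype.prod_pow_mulSingle]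
    have hdvd := map_dvd (ModelRing.eval₂Hom π Polynomial.C x hx) h
    simp only [ModelRing.eval₂Hom_modelMonomial, hxN, ← mul_assoc, ← Polynomial.C_mul] at hdvd
    have hX := Polynomial.X_pow_dvd_iff.mp ((dvd_mul_left _ _).trans hdvd)
    by_contra! hlt
    have hcoeff := hX (N' i) hlt
    simp only [Polynomial.coeff_C_mul_X_pow, if_true] at hcoeff
    exact mul_ne_zero hb' (pow_ne_zero _ hπ) hcoeff
  · intro i hi
    have hx : ∏ j ∈ modelIndices l m, Pi.mulSingle i π j = RingHom.id _ π := by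
      simp [Finset.prod_pi_mulSingle', hi]
    have hdvd := map_dvd (ModelRing.eval₂Hom π (RingHom.id _) _ hx) h
    simp only [ModelRing.eval₂Hom_modelMonomial, Fintype.prod_pow_mulSingle,
      RingHom.id_apply] at hdvd
    have hle := (Valuation.integer.integers v).le_of_dvd hdvd
    simp only [map_mul, map_pow] at hle
    exact hle

/-- The quotient of the two monomials is `(b' π^p / (b π^q)) t^e`. -/
lemma MonomialDvdCondition.exists_quotient (hπ : π ≠ 0)
    (h : MonomialDvdCondition v l m π b N b' N') :
    ∃ p q : ℕ, ∃ e : Fin (l + 1) → ℕ, (p = 0 ∨ q = 0) ∧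
      (∀ i, N i + e i + (if i ∈ modelIndices l m then p else 0)
        = N' i + if i ∈ modelIndices l m then q else 0) ∧
      v (b' : k) * v (π : k) ^ p ≤ v (b : k) * v (π : k) ^ q := by
  obtain ⟨i₀, hi₀, hmin⟩ := (modelIndices l m).exists_min_image (fun i => (N' i : ℤ) - N i)
    ⟨0, zero_mem_modelIndices l m⟩
  refine ⟨N' i₀ - N i₀, N i₀ - N' i₀,
    fun i => if i ∈ modelIndices l m then N' i + N i₀ - N i - N' i₀ else N' i - N i,
    by omega, fun i => ?_, ?_⟩
  · by_cases hi : i ∈ modelIndices l m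
    · have := hmin i hi
      simp only [if_pos hi]
      omega
    · have := h.1 i hi
      simp only [if_neg hi]
      omega
  · have hπ0 : v (π : k) ≠ 0 := by simpa using hπ
    exact (NNReal.mul_pow_le_mul_pow_iff_tsub hπ0 _ _).mp (h.2 i₀ hi₀)

lemma MonomialDvdCondition.dvd (hπ : π ≠ 0) (h : MonomialDvdCondition v l m π b N b' N') :
    modelMonomial v l m π b N ∣ modelMonomial v l m π b' N' := by
  obtain ⟨p, q, e, hpq, he, hval⟩ := h.exists_quotient hπ
  obtain ⟨c, hc⟩ := (Valuation.integer.integers v).dvd_of_le (x := b' * π ^ p) (y := b * π ^ q)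
    (by simp only [map_mul, map_pow]; exact hval)
  refine ⟨modelMonomial v l m π c e, ?_⟩
  rw [modelMonomial_mul]
  rcases hpq with rfl | rfl
  · have hN : N + e = fun i => N' i + if i ∈ modelIndices l m then q else 0 :=
      funext fun i => by simpa using he i
    rw [pow_zero, mul_one] at hc
    rw [hN, modelMonomial_add_indicator, hc, mul_right_comm]
  · have hN' : N' = fun i => (N + e) i + if i ∈ modelIndices l m then p else 0 :=
      funext fun i => by simpa using (he i).symm
    rw [hN', modelMonomial_add_indicator, hc, pow_zero, mul_one]

lemma MonomialDvdCondition.forall_mem_Delta (hπ : π ≠ 0)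
    (h : MonomialDvdCondition v l m π b N b' N') :
    ∀ r ∈ Delta v l m π, v (b' : k) * ∏ i, r i ^ N' i ≤ v (b : k) * ∏ i, r i ^ N i := by
  intro r hr
  rw [mem_Delta_iff] at hr
  obtain ⟨p, q, e, -, he, hval⟩ := h.exists_quotient hπ
  have hπ0 : v (π : k) ≠ 0 := by simpa using hπ
  have hsplit : (∏ i, r i ^ N' i) * v (π : k) ^ q
      = (∏ i, r i ^ N i) * (∏ i, r i ^ e i) * v (π : k) ^ p := calc
    _ = ∏ i, r i ^ (N' i + if i ∈ modelIndices l m then q else 0) := by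
      rw [prod_pow_add_indicator, hr.2]
    _ = ∏ i, r i ^ ((N + e) i + if i ∈ modelIndices l m then p else 0) := by
      simp only [Pi.add_apply, he]
    _ = _ := by
      rw [prod_pow_add_indicator, hr.2]
      simp only [Pi.add_apply, pow_add, Finset.prod_mul_distrib]
  have hE : ∏ i, r i ^ e i ≤ 1 := Finset.prod_le_one' fun i _ => pow_le_one₀ zero_le (hr.1 i)
  refine le_of_mul_le_mul_right ?_ (pow_pos (pos_iff_ne_zero.mpr hπ0) q)
  calc v (b' : k) * (∏ i, r i ^ N' i) * v (π : k) ^ q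
      = v (b' : k) * v (π : k) ^ p * (∏ i, r i ^ N i) * (∏ i, r i ^ e i) := by
        rw [mul_assoc, hsplit]; ring
    _ ≤ v (b : k) * v (π : k) ^ q * (∏ i, r i ^ N i) * 1 := by gcongr
    _ = v (b : k) * (∏ i, r i ^ N i) * v (π : k) ^ q := by ring

lemma monomialDvdCondition_of_forall_mem_Delta (hπ : π ≠ 0) (hb' : b' ≠ 0)
    (h : ∀ r ∈ Delta v l m π, v (b' : k) * ∏ i, r i ^ N' i ≤ v (b : k) * ∏ i, r i ^ N i) :
    MonomialDvdCondition v l m π b N b' N' := by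
  have hπ1 : v (π : k) ≤ 1 := π.2
  constructor
  · intro i hi
    refine NNReal.le_of_forall_mul_pow_le (u := v (b : k) * v (π : k) ^ N 0)
      (u' := v (b' : k) * v (π : k) ^ N' 0)
      (mul_ne_zero (by simpa using hb') (pow_ne_zero _ (by simpa using hπ))) fun ε _ hε1 => ?_
    let r : Fin (l + 1) → ℝ≥0 := Pi.mulSingle 0 (v (π : k)) * Pi.mulSingle i ε
    have hr : r ∈ Delta v l m π := by
      refine (mem_Delta_iff v l m π).mpr ⟨fun j => mul_le_one' ?_ ?_, ?_⟩
      · exact Pi.mulSingle_le_one.mpr hπ1 j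
      · exact Pi.mulSingle_le_one.mpr hε1 j
      · simp [r, Finset.prod_mul_distrib, Finset.prod_pi_mulSingle', zero_mem_modelIndices, hi]
    simpa only [r, Pi.mul_apply, mul_pow, Finset.prod_mul_distrib, Fintype.prod_pow_mulSingle,
      mul_assoc] using h r hr
  · intro i hi
    have hr : Pi.mulSingle i (v (π : k)) ∈ Delta v l m π := (mem_Delta_iff v l m π).mpr
      ⟨Pi.mulSingle_le_one.mpr hπ1, by simp [Finset.prod_pi_mulSingle', hi]⟩
    simpa [Fintype.prod_pow_mulSingle] using h _ hr

theorem modelMonomial_dvd_iff_forall_mem_Delta (hπ : π ≠ 0) (hb' : b' ≠ 0) :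
    modelMonomial v l m π b N ∣ modelMonomial v l m π b' N' ↔
      ∀ r ∈ Delta v l m π, v (b' : k) * ∏ i, r i ^ N' i ≤ v (b : k) * ∏ i, r i ^ N i :=
  ⟨fun h => (monomialDvdCondition_of_dvd hπ hb' h).forall_mem_Delta hπ,
    fun h => (monomialDvdCondition_of_forall_mem_Delta hπ hb' h).dvd hπ⟩

end

theorem specialMonomial_dvd_iff_delta_general
    {k : Type*} [Field k] (v : Valuation k ℝ≥0)
    (l m : ℕ) (π : v.integer) (hπ : π ≠ 0)
    (b b' : v.integer) (hb' : b' ≠ 0)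
    (n n' : Fin l → ℤ) (hn : IsSpecialIndex l m n) (hn' : IsSpecialIndex l m n') :
    specialMonomial v l m π b' n' ∈ Ideal.span {specialMonomial v l m π b n} ↔
      ∀ r ∈ Delta v l m π, monValue v l m π b' n' r ≤ monValue v l m π b n r := by
  rw [Ideal.mem_span_singleton (α := ModelRing v l m π), specialMonomial_eq_modelMonomial,
    specialMonomial_eq_modelMonomial, modelMonomial_dvd_iff_forall_mem_Delta hπ hb']
  refine forall₂_congr fun r hr => ?_
  rw [monValue_eq_of_mem_Delta hπ b hn hr, monValue_eq_of_mem_Delta hπ b' hn' hr]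

theorem specialMonomial_dvd_iff_delta
    {k : Type*} [Field k] (v : Valuation k ℝ≥0)
    (hv : ∃ x : k, v x ≠ 0 ∧ v x ≠ 1)
    (l m : ℕ) (hm : m ≤ l) (π : v.integer) (hπ : π ≠ 0)
    (b b' : v.integer) (hb : b ≠ 0) (hb' : b' ≠ 0)
    (n n' : Fin l → ℤ) (hn : IsSpecialIndex l m n) (hn' : IsSpecialIndex l m n') :
    specialMonomial v l m π b' n' ∈ Ideal.span {specialMonomial v l m π b n} ↔
      ∀ r ∈ Delta v l m π, monValue v l m π b' n' r ≤ monValue v l m π b n r :=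
  specialMonomial_dvd_iff_delta_general v l m π hπ b b' hb' n n' hn hn'

end Altered
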